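/- arXiv:1010.3813 — 4 statements merged into one kernel-verified Lean document; each statement's English description precedes it below -/
import Mathlib

section
/- For any matrices: if S is a d×d real positive definite matrix, then the minimum of Tr(S G^{-1}) over all d×d real positive definite matrices G with Tr G = 1 equals (Tr √S)², and the minimum is attained exactly when G = √S / Tr √S. -/
open Matrix

open scoped Classical in
noncomputable def msqrt {d : ℕ} (A : Matrix (Fin d) (Fin d) ℝ) : Matrix (Fin d) (Fin d) ℝ :=
  if h : A.PosSemidef then
    (h.1.eigenvectorUnitary : Matrix (Fin d) (Fin d) ℝ) *
      diagonal (((↑) : ℝ → ℝ) ∘ (fun x => Real.sqrt x) ∘ h.1.eigenvalues) *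
      (star h.1.eigenvectorUnitary : Matrix (Fin d) (Fin d) ℝ) else 0

/-!
Write `A = √S` and `c = Tr A`. For every `G` with `Tr G = 1`,
`Tr (S G⁻¹) = c² + Tr ((A - c G) G⁻¹ (A - c G))`, and the last term is the squared norm of
`A - c G` for the inner product `⟪X, Y⟫ = Tr (Y G⁻¹ Xᴴ)` induced by `G⁻¹ > 0`. Hence
`Tr (S G⁻¹) ≥ c²`, with equality iff `A = c G`.
-/

open scoped MatrixOrder ComplexOrder

lemma msqrt_eq_sqrt {d : ℕ} {A : Matrix (Fin d) (Fin d) ℝ} (hA : A.PosSemidef) :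
    msqrt A = CFC.sqrt A := by
  rw [CFC.sqrt_eq_cfc, cfc_nnreal_eq_real _ A, hA.1.cfc_eq, msqrt, dif_pos hA]
  rw [IsHermitian.cfc, Unitary.conjStarAlgAut_apply]
  congr 3
  funext x
  simp [hA.eigenvalues_nonneg]

namespace Matrix

variable {m n 𝕜 : Type*} [Fintype m] [Fintype n] [RCLike 𝕜]

theorem PosDef.trace_mul_mul_conjTranspose_eq_zero_iff {P : Matrix n n 𝕜} (hP : P.PosDef)
    {X : Matrix m n 𝕜} : (X * P * Xᴴ).trace = 0 ↔ X = 0 := by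
  classical
  obtain ⟨B, hB, rfl⟩ := CStarAlgebra.isStrictlyPositive_iff_eq_star_mul_self.mp
    hP.isStrictlyPositive
  have hfactor : X * (star B * B) * Xᴴ = (X * star B) * (X * star B)ᴴ := by
    simp [star_eq_conjTranspose, conjTranspose_mul, Matrix.mul_assoc]
  rw [hfactor, trace_mul_conjTranspose_self_eq_zero_iff]
  refine ⟨fun h => ?_, fun h => by simp [h]⟩
  lift B to (Matrix n n 𝕜)ˣ using hB
  simpa [Matrix.mul_assoc] using congr($h * (star (B : Matrix n n 𝕜))⁻¹)

variable {R : Type*} [CommRing R] [DecidableEq n]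

theorem trace_sub_smul_mul_inv_mul_sub_smul (A : Matrix n n R) {G : Matrix n n R}
    (hG : IsUnit G.det) (c : R) :
    ((A - c • G) * G⁻¹ * (A - c • G)).trace =
      (A * A * G⁻¹).trace - 2 * c * A.trace + c ^ 2 * G.trace := by
  have hAGA : (A * G⁻¹ * A).trace = (A * A * G⁻¹).trace := by
    rw [trace_mul_comm, ← Matrix.mul_assoc]
  simp only [sub_mul, mul_sub, smul_mul_assoc, mul_smul_comm, trace_sub, trace_smul,
    mul_nonsing_inv _ hG, nonsing_inv_mul_cancel_right G A hG, Matrix.one_mul, hAGA, smul_eq_mul]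
  ring

variable {S A G : Matrix n n ℝ}

theorem trace_mul_inv_eq_sq_trace_add (hA : A.IsHermitian) (hAS : A * A = S) (hG : G.PosDef)
    (hG1 : G.trace = 1) :
    (S * G⁻¹).trace =
      A.trace ^ 2 + ((A - A.trace • G) * G⁻¹ * (A - A.trace • G)ᴴ).trace := by
  rw [← hAS, (hA.sub (hG.isHermitian.smul (.all _))).eq, trace_sub_smul_mul_inv_mul_sub_smul A
    hG.det_pos.ne'.isUnit _, hG1]
  ring

theorem sq_trace_le_trace_mul_inv (hA : A.IsHermitian) (hAS : A * A = S) (hG : G.PosDef)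
    (hG1 : G.trace = 1) :
    A.trace ^ 2 ≤ (S * G⁻¹).trace := by
  rw [trace_mul_inv_eq_sq_trace_add hA hAS hG hG1, le_add_iff_nonneg_right]
  exact (hG.inv.posSemidef.mul_mul_conjTranspose_same _).trace_nonneg

theorem trace_mul_inv_eq_sq_trace_iff (hA : A.IsHermitian) (hAS : A * A = S) (hG : G.PosDef)
    (hG1 : G.trace = 1) :
    (S * G⁻¹).trace = A.trace ^ 2 ↔ A = A.trace • G := by
  rw [trace_mul_inv_eq_sq_trace_add hA hAS hG hG1, add_eq_left,
    hG.inv.trace_mul_mul_conjTranspose_eq_zero_iff, sub_eq_zero]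

end Matrix

/-- For a `d × d` real positive definite matrix `S`, the minimum of `Tr (S G⁻¹)` over all
`d × d` real positive definite matrices `G` with `Tr G = 1` equals `(Tr √S)²`, and the
minimum is attained exactly when `G = √S / Tr √S`. -/
theorem stmt0 {d : ℕ} (S : Matrix (Fin d) (Fin d) ℝ) (hS : S.PosDef) :
    (∀ G : Matrix (Fin d) (Fin d) ℝ, G.PosDef → G.trace = 1 →
      ((msqrt S).trace) ^ 2 ≤ (S * G⁻¹).trace) ∧
    (∀ G : Matrix (Fin d) (Fin d) ℝ, G.PosDef → G.trace = 1 →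
      ((S * G⁻¹).trace = ((msqrt S).trace) ^ 2 ↔ G = ((msqrt S).trace)⁻¹ • msqrt S)) := by
  have hA : (msqrt S).PosDef := by
    rw [msqrt_eq_sqrt hS.posSemidef]
    exact (IsStrictlyPositive.sqrt S hS.isStrictlyPositive).posDef
  have hAA : msqrt S * msqrt S = S := by
    rw [msqrt_eq_sqrt hS.posSemidef, CFC.sqrt_mul_sqrt_self S hS.posSemidef.nonneg]
  refine ⟨fun G hG hG1 => sq_trace_le_trace_mul_inv hA.isHermitian hAA hG hG1,
    fun G hG hG1 => ?_⟩
  obtain _ | _ := isEmpty_or_nonempty (Fin d)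
  · simp [trace_eq_zero_of_isEmpty] at hG1
  rw [eq_comm (a := G), inv_smul_eq_iff₀ hA.trace_pos.ne']
  exact trace_mul_inv_eq_sq_trace_iff hA.isHermitian hAA hG hG1
end

section
/- Let ρ be a strictly positive density operator on a finite-dimensional Hilbert space H of dimension q, let ⟨A,B⟩_ρ = (1/2)Tr ρ(A*B+BA*), and let L¹,…,L^d be selfadjoint operators such that {L¹,…,L^d, I} is orthonormal with respect to ⟨·,·⟩_ρ. Then for any POVM M = (M₁,…,M_s) with each Tr ρM_n > 0, the matrix ĝ(M) = [Σ_n ⟨L^i, M_n⟩_ρ ⟨L^j, M_n⟩_ρ / ⟨I, M_n⟩_ρ]_{ij} satisfies Tr ĝ(M) ≤ q − 1. -/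
open Matrix ComplexOrder

/-!
Orthonormality of `{L¹, …, L^d, I}` for the real symmetric form `Re ⟨·,·⟩_ρ` gives, by Bessel's
inequality applied to a POVM element `M_n`,
`Σᵢ ⟨Lⁱ, M_n⟩² + (Tr ρM_n)² ≤ ⟨M_n, M_n⟩_ρ = Tr ρM_n² ≤ (Tr M_n)(Tr ρM_n)`,
the last step because every eigenvalue of `M_n ≥ 0` is at most `Tr M_n`. Dividing by `Tr ρM_n`
and summing over `n` bounds the trace of `ĝ(M)` by `Σ Tr M_n − Σ Tr ρM_n = Tr I − Tr ρ = q − 1`.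
-/

theorem Finset.sum_mul_mul_self_le_sum_mul_sum {ι R : Type*} [CommSemiring R] [PartialOrder R]
    [IsOrderedRing R] (s : Finset ι) {a μ : ι → R} (ha : ∀ i ∈ s, 0 ≤ a i)
    (hμ : ∀ i ∈ s, 0 ≤ μ i) :
    ∑ i ∈ s, a i * (μ i * μ i) ≤ (∑ j ∈ s, μ j) * ∑ i ∈ s, a i * μ i := by
  rw [Finset.mul_sum]
  refine Finset.sum_le_sum fun i hi => ?_
  calc a i * (μ i * μ i) = μ i * (a i * μ i) := by ring
    _ ≤ (∑ j ∈ s, μ j) * (a i * μ i) :=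
      mul_le_mul_of_nonneg_right (Finset.single_le_sum hμ hi) (mul_nonneg (ha i hi) (hμ i hi))

theorem LinearMap.BilinForm.sum_sq_apply_le_of_orthonormal {ι R E : Type*} [Fintype ι]
    [DecidableEq ι] [CommRing R] [PartialOrder R] [IsOrderedAddMonoid R] [AddCommGroup E]
    [Module R E] {B : LinearMap.BilinForm R E} (hB : B.IsSymm) (hB_nonneg : ∀ x, 0 ≤ B x x)
    {e : ι → E} (he : ∀ i j, B (e i) (e j) = if i = j then 1 else 0) (x : E) :
    ∑ i, B (e i) x ^ 2 ≤ B x x := by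
  simpa [sq, he, hB.eq x] using hB_nonneg (x - ∑ i, B (e i) x • e i)

namespace Matrix

variable {n : Type*} [Fintype n]

section Trace

variable {𝕜 : Type*} [RCLike 𝕜] [DecidableEq n]

theorem trace_mul_conjStarAlgAut (ρ X : Matrix n n 𝕜) (U : unitary (Matrix n n 𝕜)) :
    (ρ * Unitary.conjStarAlgAut 𝕜 _ U X).trace =
      (Unitary.conjStarAlgAut 𝕜 _ (star U) ρ * X).trace := by
  simp only [Unitary.conjStarAlgAut_apply, Unitary.coe_star, star_star, Matrix.mul_assoc]
  rw [trace_mul_comm (star (U : Matrix n n 𝕜))]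
  simp only [Matrix.mul_assoc]

theorem PosSemidef.trace_mul_mul_self_le {ρ M : Matrix n n 𝕜} (hρ : ρ.PosSemidef)
    (hM : M.PosSemidef) : (ρ * (M * M)).trace ≤ M.trace * (ρ * M).trace := by
  -- in an eigenbasis of `M` this is `Σ ρ'ₖₖ μₖ² ≤ (Σ μⱼ)(Σ ρ'ₖₖ μₖ)`
  set U := hM.1.eigenvectorUnitary
  set μ : n → 𝕜 := RCLike.ofReal ∘ hM.1.eigenvalues
  set ρ' := Unitary.conjStarAlgAut 𝕜 _ (star U) ρ
  have hρ' : ρ'.PosSemidef := by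
    simpa [ρ', star_eq_conjTranspose] using hρ.conjTranspose_mul_mul_same (U : Matrix n n 𝕜)
  have hspec : M = Unitary.conjStarAlgAut 𝕜 _ U (diagonal μ) := hM.1.spectral_theorem
  have htrace (d : n → 𝕜) :
      (ρ * Unitary.conjStarAlgAut 𝕜 _ U (diagonal d)).trace = ∑ i, ρ' i i * d i := by
    rw [trace_mul_conjStarAlgAut]
    simp [trace, mul_diagonal, ρ']
  have hμ : ∀ i ∈ Finset.univ, 0 ≤ μ i := fun i _ => by
    simpa [μ] using hM.eigenvalues_nonneg i
  calc (ρ * (M * M)).trace = ∑ i, ρ' i i * (μ i * μ i) := by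
        rw [hspec, ← map_mul, diagonal_mul_diagonal, htrace]
    _ ≤ (∑ i, μ i) * ∑ i, ρ' i i * μ i :=
        Finset.univ.sum_mul_mul_self_le_sum_mul_sum (fun i _ => hρ'.diag_nonneg) hμ
    _ = M.trace * (ρ * M).trace := by
        rw [← htrace, ← hspec, hM.1.trace_eq_sum_eigenvalues]; rfl

end Trace

theorem sum_re_trace_mul_eq {ι : Type*} [Fintype ι] [DecidableEq n] {M : ι → Matrix n n ℂ}
    (hM : ∑ m, M m = 1) (ρ : Matrix n n ℂ) : ∑ m, (ρ * M m).trace.re = ρ.trace.re := by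
  rw [← Complex.re_sum, ← trace_sum, ← Finset.mul_sum, hM, Matrix.mul_one]

section SLD

variable {ρ : Matrix n n ℂ}

/-- The symmetric logarithmic derivative (SLD) inner product `⟨A, B⟩_ρ`. -/
noncomputable def sldInner (ρ A B : Matrix n n ℂ) : ℂ :=
  (1 / 2 : ℂ) * (ρ * (Aᴴ * B + B * Aᴴ)).trace

theorem sldInner_one_left [DecidableEq n] (B : Matrix n n ℂ) :
    sldInner ρ 1 B = (ρ * B).trace := by
  simp only [sldInner, conjTranspose_one, Matrix.one_mul, Matrix.mul_one, ← two_smul ℂ B,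
    Matrix.mul_smul, trace_smul, smul_eq_mul]
  ring

theorem sldInner_self_of_isHermitian {M : Matrix n n ℂ} (hM : M.IsHermitian) :
    sldInner ρ M M = (ρ * (M * M)).trace := by
  simp only [sldInner, hM.eq, ← two_smul ℂ (M * M), Matrix.mul_smul, trace_smul, smul_eq_mul]
  ring

theorem star_sldInner (hρ : ρ.IsHermitian) (A B : Matrix n n ℂ) :
    star (sldInner ρ A B) = sldInner ρ B A := by
  rw [sldInner, sldInner, star_mul', ← trace_conjTranspose, conjTranspose_mul, hρ.eq,
    trace_mul_comm]
  simp [add_comm]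

theorem sldInner_comm_of_isHermitian {A B : Matrix n n ℂ} (hA : A.IsHermitian)
    (hB : B.IsHermitian) : sldInner ρ A B = sldInner ρ B A := by
  rw [sldInner, sldInner, hA.eq, hB.eq, add_comm (A * B)]

theorem ofReal_re_sldInner (hρ : ρ.IsHermitian) {A B : Matrix n n ℂ} (hA : A.IsHermitian)
    (hB : B.IsHermitian) : ((sldInner ρ A B).re : ℂ) = sldInner ρ A B := by
  rw [← Complex.conj_eq_iff_re]
  exact (star_sldInner hρ A B).trans (sldInner_comm_of_isHermitian hB hA)

theorem sldInner_self_nonneg (hρ : ρ.PosSemidef) (A : Matrix n n ℂ) :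
    0 ≤ sldInner ρ A A := by
  have hconj (X : Matrix n n ℂ) : 0 ≤ (ρ * (Xᴴ * X)).trace := by
    rw [← Matrix.mul_assoc, trace_mul_comm, ← Matrix.mul_assoc]
    exact (hρ.mul_mul_conjTranspose_same X).trace_nonneg
  have hconj' := hconj Aᴴ
  rw [conjTranspose_conjTranspose] at hconj'
  rw [sldInner, Matrix.mul_add, trace_add]
  exact mul_nonneg (by rw [Complex.le_def]; norm_num) (add_nonneg (hconj A) hconj')

theorem sldInner_add_left (A₁ A₂ B : Matrix n n ℂ) :
    sldInner ρ (A₁ + A₂) B = sldInner ρ A₁ B + sldInner ρ A₂ B := by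
  simp only [sldInner, conjTranspose_add, Matrix.add_mul, Matrix.mul_add, trace_add]
  ring

theorem sldInner_add_right (A B₁ B₂ : Matrix n n ℂ) :
    sldInner ρ A (B₁ + B₂) = sldInner ρ A B₁ + sldInner ρ A B₂ := by
  simp only [sldInner, Matrix.add_mul, Matrix.mul_add, trace_add]
  ring

theorem sldInner_smul_left (c : ℂ) (A B : Matrix n n ℂ) :
    sldInner ρ (c • A) B = star c * sldInner ρ A B := by
  simp only [sldInner, conjTranspose_smul, smul_mul, Matrix.mul_smul, ← smul_add, trace_smul,
    smul_eq_mul]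
  ring

theorem sldInner_smul_right (c : ℂ) (A B : Matrix n n ℂ) :
    sldInner ρ A (c • B) = c * sldInner ρ A B := by
  simp only [sldInner, smul_mul, Matrix.mul_smul, ← smul_add, trace_smul, smul_eq_mul]
  ring

noncomputable def sldForm (ρ : Matrix n n ℂ) : LinearMap.BilinForm ℝ (Matrix n n ℂ) :=
  LinearMap.mk₂ ℝ (fun A B => (sldInner ρ A B).re)
    (fun A₁ A₂ B => by simp only [sldInner_add_left, Complex.add_re])
    (fun c A B => by
      rw [← Complex.coe_smul, sldInner_smul_left, Complex.star_def, Complex.conj_ofReal,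
        Complex.re_ofReal_mul, smul_eq_mul])
    (fun A B₁ B₂ => by simp only [sldInner_add_right, Complex.add_re])
    (fun c A B => by
      rw [← Complex.coe_smul, sldInner_smul_right, Complex.re_ofReal_mul, smul_eq_mul])

theorem sldForm_apply (A B : Matrix n n ℂ) : sldForm ρ A B = (sldInner ρ A B).re := rfl

theorem sldForm_isSymm (hρ : ρ.IsHermitian) : (sldForm ρ).IsSymm :=
  ⟨fun A B => by
    rw [sldForm_apply, sldForm_apply, ← star_sldInner hρ, Complex.star_def, Complex.conj_re]⟩

theorem sldForm_self_nonneg (hρ : ρ.PosSemidef) (A : Matrix n n ℂ) : 0 ≤ sldForm ρ A A :=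
  (Complex.le_def.mp (sldInner_self_nonneg hρ A)).1

variable [DecidableEq n] {ι : Type*} [Fintype ι] [DecidableEq ι] {L : ι → Matrix n n ℂ}

theorem sum_sq_sldForm_add_sq_le_trace_mul (hρ : ρ.PosSemidef) (hρ1 : ρ.trace = 1)
    (horth : ∀ i j, sldInner ρ (L i) (L j) = if i = j then 1 else 0)
    (horthI : ∀ i, sldInner ρ (L i) 1 = 0) {M : Matrix n n ℂ} (hM : M.PosSemidef) :
    ∑ i, sldForm ρ (L i) M ^ 2 + (ρ * M).trace.re ^ 2 ≤ M.trace.re * (ρ * M).trace.re := by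
  let e : Option ι → Matrix n n ℂ := fun o => o.elim 1 L
  have he : ∀ o o', sldForm ρ (e o) (e o') = if o = o' then 1 else 0 := by
    rintro (_ | i) (_ | j)
    · simp [e, sldForm_apply, sldInner_one_left, hρ1]
    · simp [e, sldForm_apply, ← star_sldInner hρ.1 (L j) 1, horthI]
    · simp [e, sldForm_apply, horthI]
    · simp [e, sldForm_apply, horth, apply_ite Complex.re]
  have hbessel := LinearMap.BilinForm.sum_sq_apply_le_of_orthonormal (sldForm_isSymm hρ.1)
    (sldForm_self_nonneg hρ) he M
  rw [Fintype.sum_option] at hbessel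
  simp only [e, Option.elim, sldForm_apply, sldInner_one_left,
    sldInner_self_of_isHermitian hM.1] at hbessel
  have htrace := (Complex.le_def.mp (hρ.trace_mul_mul_self_le hM)).1
  rw [Complex.mul_re, ← (Complex.le_def.mp hM.trace_nonneg).2, Complex.zero_im, zero_mul,
    sub_zero] at htrace
  simp only [sldForm_apply]
  linarith

theorem sum_sq_sldForm_div_le (hρ : ρ.PosSemidef) (hρ1 : ρ.trace = 1)
    (horth : ∀ i j, sldInner ρ (L i) (L j) = if i = j then 1 else 0)
    (horthI : ∀ i, sldInner ρ (L i) 1 = 0) {M : Matrix n n ℂ} (hM : M.PosSemidef)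
    (hρM : 0 < (ρ * M).trace.re) :
    ∑ i, sldForm ρ (L i) M ^ 2 / (ρ * M).trace.re ≤ M.trace.re - (ρ * M).trace.re := by
  rw [← Finset.sum_div, div_le_iff₀ hρM]
  linarith [sum_sq_sldForm_add_sq_le_trace_mul hρ hρ1 horth horthI hM]

end SLD

end Matrix

/-- Let `ρ` be a strictly positive density operator on a `q`-dimensional Hilbert space,
`⟨A,B⟩_ρ = (1/2)Tr ρ(A*B+BA*)`, and `L¹,…,L^d` selfadjoint operators such that
`{L¹,…,L^d, I}` is orthonormal with respect to `⟨·,·⟩_ρ`. Then for any POVM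
`M = (M₁,…,M_s)` with each `Tr ρM_n > 0`, one has
`Tr ĝ(M) = Σᵢ Σ_n ⟨Lⁱ,M_n⟩_ρ²/⟨I,M_n⟩_ρ ≤ q − 1`. -/
theorem stmt10 {q d s : ℕ} (ρ : Matrix (Fin q) (Fin q) ℂ) (hρ : ρ.PosDef) (hρ1 : ρ.trace = 1)
    (inn : Matrix (Fin q) (Fin q) ℂ → Matrix (Fin q) (Fin q) ℂ → ℂ)
    (hinn : ∀ A B, inn A B = (1 / 2 : ℂ) * (ρ * (Aᴴ * B + B * Aᴴ)).trace)
    (L : Fin d → Matrix (Fin q) (Fin q) ℂ) (hLh : ∀ i, (L i).IsHermitian)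
    (horth : ∀ i j, inn (L i) (L j) = if i = j then 1 else 0)
    (horthI : ∀ i, inn (L i) 1 = 0)
    (M : Fin s → Matrix (Fin q) (Fin q) ℂ) (hMpos : ∀ m, (M m).PosSemidef)
    (hMsum : ∑ m, M m = 1) (hMtr : ∀ m, 0 < (ρ * M m).trace) :
    (∑ i, ∑ m, inn (L i) (M m) * inn (L i) (M m) / inn 1 (M m)) ≤ (q : ℂ) - 1 := by
  obtain rfl : inn = sldInner ρ := funext₂ hinn
  set t : Fin s → ℝ := fun m => (ρ * M m).trace.re
  have hterm (i : Fin d) (m : Fin s) : sldInner ρ (L i) (M m) * sldInner ρ (L i) (M m) /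
      sldInner ρ 1 (M m) = ((sldForm ρ (L i) (M m) ^ 2 / t m : ℝ) : ℂ) := by
    rw [← ofReal_re_sldInner hρ.1 (hLh i) (hMpos m).1,
      ← ofReal_re_sldInner hρ.1 isHermitian_one (hMpos m).1, sldInner_one_left]
    push_cast
    rw [sq, sldForm_apply]
  calc ∑ i, ∑ m, sldInner ρ (L i) (M m) * sldInner ρ (L i) (M m) / sldInner ρ 1 (M m)
      = ((∑ m, ∑ i, sldForm ρ (L i) (M m) ^ 2 / t m : ℝ) : ℂ) := by
        simp only [hterm, Finset.sum_comm (γ := Fin d)]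
        push_cast
        rfl
    _ ≤ ((∑ m, ((M m).trace.re - t m) : ℝ) : ℂ) :=
        Complex.real_le_real.mpr <| Finset.sum_le_sum fun m _ =>
          sum_sq_sldForm_div_le hρ.posSemidef hρ1 horth horthI (hMpos m)
            (Complex.lt_def.mp (hMtr m)).1
    _ = (q : ℂ) - 1 := by
        rw [Finset.sum_sub_distrib, sum_re_trace_mul_eq hMsum, hρ1]
        simpa using congrArg Complex.ofReal (sum_re_trace_mul_eq hMsum 1)
end

section
/- A weight H : x ↦ H_x assigning to each nonzero x in the open unit ball of ℝ³ a real symmetric positive definite 3×3 matrix is rotationally symmetric (U* H_{Ux} U = H_x for all U ∈ SO(3)) if and only if there exist functions f, g : (0,1) → (0,∞) such that H_x = f(|x|) I + (g(|x|) − f(|x|)) |x⟩⟨x|/|x|² for all x ≠ 0. -/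
open Matrix

/-!
If `H` is invariant, its value at `r e₀` is a symmetric matrix fixed by conjugation with the
rotations about the `e₀`-axis; already the quarter turn and the half turn force it to be of the
form `a I + b e₀e₀ᵀ`. Since `SO(3)` acts transitively on spheres (a product of two Householder
reflections moves `r e₀` to any `x` with `|x| = r`), invariance transports this form to every
`x`; positivity of `f` and `g` is positivity of the diagonal of a positive definite matrix.
Conversely, `U (a I + c x xᵀ) Uᵀ = a I + c (U x)(U x)ᵀ` for orthogonal `U`.
-/

section Orthogonal

variable {n : Type*} [Fintype n]

lemma sum_sq_eq_dotProduct_self (x : n → ℝ) : ∑ i, x i ^ 2 = x ⬝ᵥ x := by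
  simp only [dotProduct, sq]

lemma dotProduct_self_pos {v : n → ℝ} (hv : v ≠ 0) : 0 < v ⬝ᵥ v :=
  lt_of_le_of_ne (Finset.sum_nonneg fun i _ => mul_self_nonneg (v i))
    (Ne.symm (dotProduct_self_eq_zero.not.mpr hv))

lemma mul_vecMulVec_mul_transpose {m : Type*} (U : Matrix m n ℝ) (a b : n → ℝ) :
    U * vecMulVec a b * Uᵀ = vecMulVec (U *ᵥ a) (U *ᵥ b) := by
  rw [mul_vecMulVec, vecMulVec_mul, vecMul_transpose]

variable [DecidableEq n]

lemma mulVec_dotProduct_mulVec_self {U : Matrix n n ℝ} (hU : Uᵀ * U = 1) (x : n → ℝ) :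
    U *ᵥ x ⬝ᵥ U *ᵥ x = x ⬝ᵥ x := by
  rw [dotProduct_mulVec, ← mulVec_transpose, mulVec_mulVec, hU, one_mulVec]

lemma mul_smul_one_add_smul_vecMulVec_mul_transpose {U : Matrix n n ℝ} (hU : U * Uᵀ = 1)
    (a c : ℝ) (u : n → ℝ) :
    U * (a • 1 + c • vecMulVec u u) * Uᵀ = a • 1 + c • vecMulVec (U *ᵥ u) (U *ᵥ u) := by
  rw [Matrix.mul_add, Matrix.add_mul, Matrix.mul_smul, Matrix.smul_mul, Matrix.mul_one, hU,
    Matrix.mul_smul, Matrix.smul_mul, mul_vecMulVec_mul_transpose]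

noncomputable def householder (w : n → ℝ) : Matrix n n ℝ :=
  1 - (2 / (w ⬝ᵥ w)) • vecMulVec w w

lemma householder_transpose (w : n → ℝ) : (householder w)ᵀ = householder w := by
  simp [householder, transpose_vecMulVec]

lemma householder_mul_self {w : n → ℝ} (hw : w ≠ 0) : householder w * householder w = 1 := by
  have hww := (dotProduct_self_pos hw).ne'
  simp only [householder, sub_mul, mul_sub, one_mul, mul_one, Matrix.smul_mul, Matrix.mul_smul,
    vecMulVec_mul_vecMulVec, vecMulVec_smul, smul_smul]
  have hc : 2 / w ⬝ᵥ w * (2 / w ⬝ᵥ w * w ⬝ᵥ w) = 2 * (2 / w ⬝ᵥ w) := by field_simp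
  rw [hc, mul_smul, two_smul]
  abel

lemma det_householder {w : n → ℝ} (hw : w ≠ 0) : (householder w).det = -1 := by
  have hww := (dotProduct_self_pos hw).ne'
  have hrankOne :
      householder w = 1 + replicateCol Unit ((-(2 / (w ⬝ᵥ w))) • w) * replicateRow Unit w := by
    rw [← vecMulVec_eq, householder, smul_vecMulVec, neg_smul, sub_eq_add_neg]
  rw [hrankOne, det_one_add_replicateCol_mul_replicateRow, dotProduct_smul, dotProduct_comm,
    smul_eq_mul, neg_mul, div_mul_cancel₀ _ hww]
  norm_num

lemma householder_mulVec_of_dotProduct_eq_zero {w u : n → ℝ} (h : w ⬝ᵥ u = 0) :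
    householder w *ᵥ u = u := by
  simp [householder, sub_mulVec, smul_mulVec, vecMulVec_mulVec, h]

lemma householder_sub_mulVec {u v : n → ℝ} (huv : u ≠ v) (h : u ⬝ᵥ u = v ⬝ᵥ v) :
    householder (u - v) *ᵥ u = v := by
  have hww := (dotProduct_self_pos (sub_ne_zero_of_ne huv)).ne'
  have hdot : (u - v) ⬝ᵥ u = (u - v) ⬝ᵥ (u - v) / 2 := by
    simp only [sub_dotProduct, dotProduct_sub, dotProduct_comm v u] at hww ⊢
    linarith
  simp only [householder, sub_mulVec, one_mulVec, smul_mulVec, vecMulVec_mulVec, hdot,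
    op_smul_eq_smul, smul_smul]
  rw [show 2 / (u - v) ⬝ᵥ (u - v) * ((u - v) ⬝ᵥ (u - v) / 2) = 1 by field_simp, one_smul,
    sub_sub_cancel]

lemma exists_rotation_mulVec_eq {u v w : n → ℝ} (huv : u ⬝ᵥ u = v ⬝ᵥ v) (hw : w ≠ 0)
    (hwu : w ⬝ᵥ u = 0) : ∃ U : Matrix n n ℝ, U * Uᵀ = 1 ∧ U.det = 1 ∧ U *ᵥ u = v := by
  by_cases h : u = v
  · exact ⟨1, by simp, det_one, by simp [h]⟩
  have hd := sub_ne_zero_of_ne h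
  -- the reflection in `w` fixes `u` and corrects the sign of the determinant
  refine ⟨householder (u - v) * householder w, ?_, ?_, ?_⟩
  · rw [transpose_mul, householder_transpose, householder_transpose, Matrix.mul_assoc,
      ← Matrix.mul_assoc (householder w), householder_mul_self hw, Matrix.one_mul,
      householder_mul_self hd]
  · rw [det_mul, det_householder hd, det_householder hw]
    norm_num
  · rw [← mulVec_mulVec, householder_mulVec_of_dotProduct_eq_zero hwu,
      householder_sub_mulVec h huv]

end Orthogonal

lemma eq_smul_one_add_smul_vecMulVec_of_stabilizer_invariant {A : Matrix (Fin 3) (Fin 3) ℝ}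
    (hA : A.IsSymm)
    (hinv : ∀ U : Matrix (Fin 3) (Fin 3) ℝ, U * Uᵀ = 1 → U.det = 1 →
      U *ᵥ ![1, 0, 0] = ![1, 0, 0] → Uᵀ * A * U = A) :
    A = A 1 1 • 1 + (A 0 0 - A 1 1) • vecMulVec ![1, 0, 0] ![1, 0, 0] := by
  have h2 := hinv !![1, 0, 0; 0, 0, -1; 0, 1, 0]
    (by ext i j; fin_cases i <;> fin_cases j <;> simp [mul_apply, Fin.sum_univ_three])
    (by simp [det_fin_three]) (by ext i; fin_cases i <;> simp)
  have h3 := hinv !![1, 0, 0; 0, -1, 0; 0, 0, -1]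
    (by ext i j; fin_cases i <;> fin_cases j <;> simp [mul_apply, Fin.sum_univ_three])
    (by simp [det_fin_three]) (by ext i; fin_cases i <;> simp)
  rw [IsSymm, ← Matrix.ext_iff] at hA
  rw [← Matrix.ext_iff] at h2 h3
  simp only [mul_apply, transpose_apply, of_apply, cons_val', cons_val_fin_one,
    Fin.sum_univ_three, Fin.isValue, cons_val_zero, cons_val_one, cons_val, Fin.forall_fin_succ,
    mul_one, mul_zero, add_zero, cons_val_succ, zero_add, Fin.succ_zero_eq_one, mul_neg,
    neg_add_rev, Fin.succ_one_eq_two, IsEmpty.forall_iff, and_true, one_mul, zero_mul, neg_zero,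
    true_and, neg_mul, neg_neg, and_self] at h2 h3 hA
  ext i j
  fin_cases i <;> fin_cases j <;> simp <;> linarith

lemma eq_smul_one_add_smul_vecMulVec_of_rotation_invariant
    {H : (Fin 3 → ℝ) → Matrix (Fin 3) (Fin 3) ℝ} {x : Fin 3 → ℝ} (hx : x ≠ 0)
    (hsym : (H (√(x ⬝ᵥ x) • ![1, 0, 0])).IsSymm)
    (hinv : ∀ U : Matrix (Fin 3) (Fin 3) ℝ, U * Uᵀ = 1 → U.det = 1 →
      Uᵀ * H (U *ᵥ (√(x ⬝ᵥ x) • ![1, 0, 0])) * U = H (√(x ⬝ᵥ x) • ![1, 0, 0])) :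
    H x = H (√(x ⬝ᵥ x) • ![1, 0, 0]) 1 1 • 1 +
      ((H (√(x ⬝ᵥ x) • ![1, 0, 0]) 0 0 - H (√(x ⬝ᵥ x) • ![1, 0, 0]) 1 1) / (x ⬝ᵥ x)) •
        vecMulVec x x := by
  set r := √(x ⬝ᵥ x)
  set A := H (r • ![1, 0, 0])
  have hxx := (dotProduct_self_pos hx).ne'
  have hrr : r * r = x ⬝ᵥ x := Real.mul_self_sqrt (dotProduct_self_pos hx).le
  have hnorm : (r • ![1, 0, 0]) ⬝ᵥ (r • ![1, 0, 0]) = x ⬝ᵥ x := by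
    simp [dotProduct, Fin.sum_univ_three, hrr]
  have hA : A = A 1 1 • 1 + ((A 0 0 - A 1 1) / (x ⬝ᵥ x)) •
      vecMulVec (r • ![1, 0, 0]) (r • ![1, 0, 0]) := by
    rw [smul_vecMulVec, vecMulVec_smul, smul_smul, smul_smul, mul_assoc, hrr,
      div_mul_cancel₀ _ hxx]
    exact eq_smul_one_add_smul_vecMulVec_of_stabilizer_invariant hsym fun U hU hdet he ↦ by
      simpa only [mulVec_smul, he] using hinv U hU hdet
  obtain ⟨U, hU, hdet, hUx⟩ := exists_rotation_mulVec_eq hnorm (w := ![0, 1, 0]) (by simp)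
    (by simp [dotProduct, Fin.sum_univ_three])
  calc H x = U * (Uᵀ * H (U *ᵥ (r • ![1, 0, 0])) * U) * Uᵀ := by
        rw [hUx, ← Matrix.mul_assoc, ← Matrix.mul_assoc, hU, Matrix.one_mul, Matrix.mul_assoc,
          hU, Matrix.mul_one]
    _ = U * A * Uᵀ := by rw [hinv U hU hdet]
    _ = _ := by
      conv_lhs => rw [hA]
      rw [mul_smul_one_add_smul_vecMulVec_mul_transpose hU, hUx]

/-- A weight `H : x ↦ H_x` assigning to each nonzero `x` in the open unit ball of `ℝ³` a
real symmetric positive definite `3×3` matrix is rotationally symmetric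
(`Uᵀ H_{Ux} U = H_x` for all `U ∈ SO(3)`) if and only if there exist functions
`f, g : (0,1) → (0,∞)` such that `H_x = f(|x|) I + (g(|x|) − f(|x|)) |x⟩⟨x|/|x|²`
for all `x ≠ 0` in the ball. -/
theorem stmt16 (H : (Fin 3 → ℝ) → Matrix (Fin 3) (Fin 3) ℝ)
    (hH : ∀ x : Fin 3 → ℝ, x ≠ 0 → ∑ i, x i ^ 2 < 1 → (H x).PosDef) :
    (∀ U : Matrix (Fin 3) (Fin 3) ℝ, U * Uᵀ = 1 → U.det = 1 →
      ∀ x : Fin 3 → ℝ, x ≠ 0 → ∑ i, x i ^ 2 < 1 →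
        Uᵀ * H (U.mulVec x) * U = H x) ↔
    (∃ f g : ℝ → ℝ, (∀ r : ℝ, 0 < r → r < 1 → 0 < f r ∧ 0 < g r) ∧
      ∀ x : Fin 3 → ℝ, x ≠ 0 → ∑ i, x i ^ 2 < 1 →
        H x = f (Real.sqrt (∑ i, x i ^ 2)) • (1 : Matrix (Fin 3) (Fin 3) ℝ) +
          ((g (Real.sqrt (∑ i, x i ^ 2)) - f (Real.sqrt (∑ i, x i ^ 2))) / (∑ i, x i ^ 2)) •
            vecMulVec x x) := by
  simp only [sum_sq_eq_dotProduct_self] at hH ⊢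
  constructor
  · intro hinv
    have hball {r : ℝ} (hr0 : 0 < r) (hr1 : r < 1) :
        (r • ![1, 0, 0] : Fin 3 → ℝ) ≠ 0 ∧ (r • ![1, 0, 0]) ⬝ᵥ (r • ![1, 0, 0] : Fin 3 → ℝ) < 1 :=
      ⟨by simpa using hr0.ne', by simp [dotProduct, Fin.sum_univ_three]; nlinarith⟩
    have hpd {r : ℝ} (hr0 : 0 < r) (hr1 : r < 1) : (H (r • ![1, 0, 0])).PosDef :=
      hH _ (hball hr0 hr1).1 (hball hr0 hr1).2
    refine ⟨fun r ↦ H (r • ![1, 0, 0]) 1 1, fun r ↦ H (r • ![1, 0, 0]) 0 0,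
      fun r hr0 hr1 ↦ ⟨(hpd hr0 hr1).diag_pos, (hpd hr0 hr1).diag_pos⟩, fun x hx hx1 ↦ ?_⟩
    have hr0 : 0 < √(x ⬝ᵥ x) := Real.sqrt_pos.2 (dotProduct_self_pos hx)
    have hr1 : √(x ⬝ᵥ x) < 1 := (Real.sqrt_lt' one_pos).2 (by rwa [one_pow])
    exact eq_smul_one_add_smul_vecMulVec_of_rotation_invariant hx
      (isHermitian_iff_isSymm.mp (hpd hr0 hr1).isHermitian)
      fun U hU hdet ↦ hinv U hU hdet _ (hball hr0 hr1).1 (hball hr0 hr1).2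
  · rintro ⟨f, g, -, hform⟩ U hU hdet x hx hx1
    have hU' : Uᵀ * U = 1 := mul_eq_one_comm.mp hU
    have hUx := mulVec_dotProduct_mulVec_self hU' x
    have hUx0 : U *ᵥ x ≠ 0 := fun h ↦ hx (by simpa [h] using hUx.symm)
    rw [hform x hx hx1, hform _ hUx0 (hUx ▸ hx1), hUx]
    simpa [hU', mulVec_mulVec] using
      mul_smul_one_add_smul_vecMulVec_mul_transpose (U := Uᵀ) (by rwa [transpose_transpose]) _ _
        (U *ᵥ x)
end

section
/- Let r ∈ (0,1), f, g > 0 reals, t ∈ [0, 2/3]. Define c = (2√f + √((1−r²)g))² and c^T = 3(2f + (1−r²)g) + 3tr²(g−f). Then c^T − c = 2(√((1−r²)g) − √f)² + 3r²(g−f)t and also c^T − c = 2(√((1−r²)f) − √g)² + 3r²(f−g)(2/3 − t); consequently c^T ≥ c. -/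
/-!
Write `s = 1 - r²`, `a = √f` and `b = √(s g)`. Expanding the square in `c` leaves
`c^T - c = 2 (b - a)² + 3 r² (g - f) t`, and since `√(s f) √g = a b` the same quantity equals
`2 (√(s f) - √g)² + 3 r² (f - g) (2/3 - t)`. Whichever of `f ≤ g` or `g ≤ f` holds, one of the
two expressions is a sum of nonnegative terms.
-/

open Real

noncomputable def optimalBound (r f g : ℝ) : ℝ :=
  (2 * √f + √((1 - r ^ 2) * g)) ^ 2

def tomographyBound (r f g t : ℝ) : ℝ :=
  3 * (2 * f + (1 - r ^ 2) * g) + 3 * t * r ^ 2 * (g - f)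

lemma sqrt_mul_mul_sqrt_eq {s : ℝ} (hs : 0 ≤ s) (f g : ℝ) :
    √(s * f) * √g = √f * √(s * g) := by
  rw [sqrt_mul hs, sqrt_mul hs]
  ring

section

variable {r f g : ℝ} (t : ℝ)

lemma tomographyBound_sub_optimalBound (hr : r ^ 2 ≤ 1) (hf : 0 ≤ f) (hg : 0 ≤ g) :
    tomographyBound r f g t - optimalBound r f g =
      2 * (√((1 - r ^ 2) * g) - √f) ^ 2 + 3 * r ^ 2 * (g - f) * t := by
  have hb : √((1 - r ^ 2) * g) ^ 2 = (1 - r ^ 2) * g :=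
    sq_sqrt (mul_nonneg (sub_nonneg.2 hr) hg)
  unfold tomographyBound optimalBound
  linear_combination (-6 : ℝ) * sq_sqrt hf - 3 * hb

lemma tomographyBound_sub_optimalBound' (hr : r ^ 2 ≤ 1) (hf : 0 ≤ f) (hg : 0 ≤ g) :
    tomographyBound r f g t - optimalBound r f g =
      2 * (√((1 - r ^ 2) * f) - √g) ^ 2 + 3 * r ^ 2 * (f - g) * (2 / 3 - t) := by
  have hs : 0 ≤ 1 - r ^ 2 := sub_nonneg.2 hr
  rw [tomographyBound_sub_optimalBound t hr hf hg]
  linear_combination 2 * sq_sqrt hf + 2 * sq_sqrt (mul_nonneg hs hg)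
    - 2 * sq_sqrt (mul_nonneg hs hf) - 2 * sq_sqrt hg + 4 * sqrt_mul_mul_sqrt_eq hs f g

lemma optimalBound_le_tomographyBound (hr : r ^ 2 ≤ 1) (hf : 0 ≤ f) (hg : 0 ≤ g)
    (ht0 : 0 ≤ t) (ht1 : t ≤ 2 / 3) :
    optimalBound r f g ≤ tomographyBound r f g t := by
  rw [← sub_nonneg]
  rcases le_total f g with hfg | hgf
  · rw [tomographyBound_sub_optimalBound t hr hf hg]
    have : 0 ≤ 3 * r ^ 2 * (g - f) * t := by
      have := sub_nonneg.2 hfg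
      positivity
    positivity
  · rw [tomographyBound_sub_optimalBound' t hr hf hg]
    have : 0 ≤ 3 * r ^ 2 * (f - g) * (2 / 3 - t) := by
      have := sub_nonneg.2 hgf
      have := sub_nonneg.2 ht1
      positivity
    positivity

end

/-- Scalar inequality establishing that the tomography bound dominates the optimal bound:
for `r ∈ (0,1)`, `f, g > 0`, `t ∈ [0, 2/3]`, with `c = (2√f + √((1−r²)g))²` and
`c^T = 3(2f + (1−r²)g) + 3tr²(g−f)`, one has
`c^T − c = 2(√((1−r²)g) − √f)² + 3r²(g−f)t` and
`c^T − c = 2(√((1−r²)f) − √g)² + 3r²(f−g)(2/3 − t)`; consequently `c ≤ c^T`. -/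
theorem stmt18 (r f g t : ℝ) (hr0 : 0 < r) (hr1 : r < 1) (hf : 0 < f) (hg : 0 < g)
    (ht0 : 0 ≤ t) (ht1 : t ≤ 2 / 3)
    (c cT : ℝ)
    (hc : c = (2 * Real.sqrt f + Real.sqrt ((1 - r ^ 2) * g)) ^ 2)
    (hcT : cT = 3 * (2 * f + (1 - r ^ 2) * g) + 3 * t * r ^ 2 * (g - f)) :
    cT - c = 2 * (Real.sqrt ((1 - r ^ 2) * g) - Real.sqrt f) ^ 2 + 3 * r ^ 2 * (g - f) * t ∧
    cT - c = 2 * (Real.sqrt ((1 - r ^ 2) * f) - Real.sqrt g) ^ 2 +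
      3 * r ^ 2 * (f - g) * (2 / 3 - t) ∧
    c ≤ cT := by
  have hr : r ^ 2 ≤ 1 := pow_le_one₀ hr0.le hr1.le
  subst hc hcT
  exact ⟨tomographyBound_sub_optimalBound t hr hf.le hg.le,
    tomographyBound_sub_optimalBound' t hr hf.le hg.le,
    optimalBound_le_tomographyBound t hr hf.le hg.le ht0 ht1⟩
end
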